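/- arXiv:2601.20773 — 4 statements merged into one kernel-verified Lean document; each statement's English description precedes it below -/
import Mathlib

section
/- Let X be a metric space, f : X → {-1,1}, A_x = {y : f(y) ≠ f(x)} nonempty for all x, ξ(x) = d(x, A_x), and ℓ_α(x) = f(x)·ξ(x)^α. If 0 < α ≤ 1, then for all x, y ∈ X, |ℓ_α(x) − ℓ_α(y)| ≤ 2 d(x,y)^α; that is, ℓ_α is α-Hölder continuous with constant 2. -/
/-!
Write `ξ x` for the distance from `x` to the set where `f` takes the other value. If `f x = f y`,
both points measure the distance to the same set, so `|ξ x - ξ y| ≤ d(x, y)`, and the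
subadditivity of `t ↦ t ^ α` for `α ≤ 1` gives `|ξ x ^ α - ξ y ^ α| ≤ d(x, y) ^ α`. If
`f x ≠ f y`, each point lies in the other's target set, so `ξ x, ξ y ≤ d(x, y)` and the two terms
of `ℓ_α x - ℓ_α y` are each bounded by `d(x, y) ^ α`.
-/

open Metric

theorem Real.abs_rpow_sub_rpow_le {a b p : ℝ} (ha : 0 ≤ a) (hb : 0 ≤ b) (hp0 : 0 ≤ p)
    (hp1 : p ≤ 1) : |a ^ p - b ^ p| ≤ |a - b| ^ p := by
  wlog hba : b ≤ a generalizing a b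
  · rw [abs_sub_comm, abs_sub_comm a]
    exact this hb ha (le_of_not_ge hba)
  have hsub : a ^ p ≤ (a - b) ^ p + b ^ p := by
    simpa using Real.rpow_add_le_add_rpow (sub_nonneg.2 hba) hb hp0 hp1
  rw [abs_of_nonneg (sub_nonneg.2 (Real.rpow_le_rpow hb hba hp0)),
    abs_of_nonneg (sub_nonneg.2 hba)]
  linarith

theorem Metric.abs_infDist_rpow_sub_infDist_rpow_le {X : Type*} [PseudoMetricSpace X]
    (s : Set X) (x y : X) {p : ℝ} (hp0 : 0 ≤ p) (hp1 : p ≤ 1) :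
    |infDist x s ^ p - infDist y s ^ p| ≤ dist x y ^ p := by
  have hlip : |infDist x s - infDist y s| ≤ dist x y := by
    simpa [Real.dist_eq] using (lipschitz_infDist_pt s).dist_le_mul x y
  calc |infDist x s ^ p - infDist y s ^ p| ≤ |infDist x s - infDist y s| ^ p :=
        Real.abs_rpow_sub_rpow_le infDist_nonneg infDist_nonneg hp0 hp1
    _ ≤ dist x y ^ p := Real.rpow_le_rpow (abs_nonneg _) hlip hp0

theorem Metric.infDist_rpow_le_dist_rpow_of_mem {X : Type*} [PseudoMetricSpace X]
    {s : Set X} {x y : X} (hy : y ∈ s) {p : ℝ} (hp0 : 0 ≤ p) :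
    infDist x s ^ p ≤ dist x y ^ p :=
  Real.rpow_le_rpow infDist_nonneg (infDist_le_dist_of_mem hy) hp0

theorem stmt_5_general {X : Type*} [MetricSpace X] (f : X → ℝ)
    (hf : ∀ x, f x = -1 ∨ f x = 1)
    (α : ℝ) (hα0 : 0 < α) (hα1 : α ≤ 1) (x y : X) :
    |f x * Metric.infDist x {z : X | f z ≠ f x} ^ α -
      f y * Metric.infDist y {z : X | f z ≠ f y} ^ α| ≤ 2 * dist x y ^ α := by
  have habs : ∀ z, |f z| = 1 := fun z => by rcases hf z with h | h <;> simp [h]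
  have hdist : 0 ≤ dist x y ^ α := Real.rpow_nonneg dist_nonneg α
  by_cases hxy : f x = f y
  · rw [hxy, ← mul_sub, abs_mul, habs, one_mul]
    linarith [abs_infDist_rpow_sub_infDist_rpow_le {z | f z ≠ f y} x y hα0.le hα1]
  · set a := infDist x {z | f z ≠ f x} ^ α
    set b := infDist y {z | f z ≠ f y} ^ α
    have hx : a ≤ dist x y ^ α := infDist_rpow_le_dist_rpow_of_mem (Ne.symm hxy) hα0.le
    have hy : b ≤ dist x y ^ α := by
      rw [dist_comm]
      exact infDist_rpow_le_dist_rpow_of_mem hxy hα0.le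
    calc |f x * a - f y * b| ≤ |f x * a| + |f y * b| := abs_sub _ _
      _ = a + b := by
        rw [abs_mul, abs_mul, habs, habs, one_mul, one_mul,
          abs_of_nonneg (Real.rpow_nonneg infDist_nonneg α),
          abs_of_nonneg (Real.rpow_nonneg infDist_nonneg α)]
      _ ≤ 2 * dist x y ^ α := by linarith

theorem stmt_5 {X : Type*} [MetricSpace X] (f : X → ℝ)
    (hf : ∀ x, f x = -1 ∨ f x = 1)
    (hA : ∀ x : X, {y : X | f y ≠ f x}.Nonempty)
    (α : ℝ) (hα0 : 0 < α) (hα1 : α ≤ 1) (x y : X) :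
    |f x * Metric.infDist x {z : X | f z ≠ f x} ^ α -
      f y * Metric.infDist y {z : X | f z ≠ f y} ^ α| ≤ 2 * dist x y ^ α :=
  stmt_5_general f hf α hα0 hα1 x y
end

section
/- Let X be a metric space bounded by D > 0 (i.e., d(x,y) ≤ D for all x,y), f : X → {-1,1}, A_x = {y : f(y) ≠ f(x)} nonempty for all x, ξ(x) = d(x, A_x), and ℓ_α(x) = f(x)·ξ(x)^α. If α ≥ 1, then for all x, y ∈ X, |ℓ_α(x) − ℓ_α(y)| ≤ 2α·D^{α−1}·d(x,y); that is, ℓ_α is Lipschitz with constant 2αD^{α−1}. -/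
/-!
Write `ξ x` for the distance from `x` to the set where `f` takes the other sign; `0 ≤ ξ ≤ D`.
If `f x = f y`, both points measure the distance to the same set, so `|ξ x - ξ y| ≤ d(x, y)`,
and `t ↦ t ^ α` is `α D ^ (α - 1)`-Lipschitz on `[0, D]` by the mean value theorem.
If `f x ≠ f y`, then `y` witnesses `ξ x ≤ d(x, y)` and `x` witnesses `ξ y ≤ d(x, y)`, and the two
terms add up: `ξ x ^ α + ξ y ^ α ≤ 2 D ^ (α - 1) d(x, y)`, using `ξ ^ α ≤ D ^ (α - 1) ξ`.
-/

open Metric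

namespace Real

theorem abs_rpow_sub_rpow_le_of_mem_Icc {M α a b : ℝ} (hα : 1 ≤ α)
    (ha : a ∈ Set.Icc 0 M) (hb : b ∈ Set.Icc 0 M) :
    |a ^ α - b ^ α| ≤ α * M ^ (α - 1) * |a - b| := by
  have hderiv_le : ∀ t ∈ Set.Icc 0 M, ‖α * t ^ (α - 1)‖ ≤ α * M ^ (α - 1) := fun t ht => by
    rw [norm_mul, norm_of_nonneg (by linarith), norm_of_nonneg (rpow_nonneg ht.1 _)]
    exact mul_le_mul_of_nonneg_left (rpow_le_rpow ht.1 ht.2 (by linarith)) (by linarith)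
  simpa only [norm_eq_abs] using (convex_Icc 0 M).norm_image_sub_le_of_norm_hasDerivWithin_le
    (fun t _ => (hasDerivAt_rpow_const (Or.inr hα)).hasDerivWithinAt) hderiv_le hb ha

theorem rpow_le_rpow_sub_one_mul {M α a d : ℝ} (hα : 1 ≤ α) (ha : a ∈ Set.Icc 0 M)
    (had : a ≤ d) : a ^ α ≤ M ^ (α - 1) * d := by
  rcases ha.1.eq_or_lt with rfl | ha0
  · rw [zero_rpow (by linarith)]
    exact mul_nonneg (rpow_nonneg (by linarith [ha.2]) _) (by linarith)
  · calc a ^ α = a ^ (α - 1) * a := by rw [← rpow_add_one ha0.ne', sub_add_cancel]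
      _ ≤ M ^ (α - 1) * d :=
          mul_le_mul (rpow_le_rpow ha.1 ha.2 (by linarith)) had ha.1 (rpow_nonneg (ha.1.trans ha.2) _)

end Real

namespace Metric

variable {X : Type*} [PseudoMetricSpace X]

theorem infDist_mem_Icc_of_forall_dist_le {D : ℝ} (hbd : ∀ x y : X, dist x y ≤ D)
    (x : X) (s : Set X) : infDist x s ∈ Set.Icc 0 D := by
  refine ⟨infDist_nonneg, ?_⟩
  rcases s.eq_empty_or_nonempty with rfl | ⟨z, hz⟩
  · simpa only [infDist_empty, dist_self] using hbd x x
  · exact (infDist_le_dist_of_mem hz).trans (hbd x z)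

theorem abs_infDist_rpow_sub_infDist_rpow_le_s6 {D α : ℝ} (hbd : ∀ x y : X, dist x y ≤ D)
    (hα : 1 ≤ α) (s : Set X) (x y : X) :
    |infDist x s ^ α - infDist y s ^ α| ≤ α * D ^ (α - 1) * dist x y := by
  have hD : 0 ≤ D := by simpa only [dist_self] using hbd x x
  calc |infDist x s ^ α - infDist y s ^ α|
      ≤ α * D ^ (α - 1) * |infDist x s - infDist y s| :=
        Real.abs_rpow_sub_rpow_le_of_mem_Icc hα (infDist_mem_Icc_of_forall_dist_le hbd x s)
          (infDist_mem_Icc_of_forall_dist_le hbd y s)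
    _ ≤ α * D ^ (α - 1) * dist x y := by
        have : 0 ≤ D ^ (α - 1) := Real.rpow_nonneg hD _
        gcongr
        simpa only [NNReal.coe_one, one_mul, Real.dist_eq] using
          (lipschitz_infDist_pt s).dist_le_mul x y

end Metric

theorem stmt_6_general {X : Type*} [MetricSpace X] (D : ℝ)
    (hbd : ∀ x y : X, dist x y ≤ D) (f : X → ℝ)
    (hf : ∀ x, f x = -1 ∨ f x = 1)
    (α : ℝ) (hα : 1 ≤ α) (x y : X) :
    |f x * Metric.infDist x {z : X | f z ≠ f x} ^ α -
      f y * Metric.infDist y {z : X | f z ≠ f y} ^ α| ≤ 2 * α * D ^ (α - 1) * dist x y := by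
  have hξ := infDist_mem_Icc_of_forall_dist_le hbd
  have hbound : 0 ≤ D ^ (α - 1) * dist x y :=
    mul_nonneg (Real.rpow_nonneg (by simpa only [dist_self] using hbd x x) _) dist_nonneg
  have habs : ∀ z, |f z| = 1 := fun z => by rcases hf z with h | h <;> simp [h]
  by_cases hfxy : f x = f y
  · rw [hfxy, ← mul_sub, abs_mul, habs, one_mul]
    calc _ ≤ α * D ^ (α - 1) * dist x y := abs_infDist_rpow_sub_infDist_rpow_le_s6 hbd hα _ x y
      _ ≤ 2 * α * D ^ (α - 1) * dist x y := by nlinarith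
  · have hξx : infDist x {z | f z ≠ f x} ≤ dist x y := infDist_le_dist_of_mem (Ne.symm hfxy)
    have hξy : infDist y {z | f z ≠ f y} ≤ dist x y :=
      (infDist_le_dist_of_mem (s := {z | f z ≠ f y}) hfxy).trans_eq (dist_comm y x)
    have hfy : f y = -f x := by rcases hf x with h | h <;> rcases hf y with h' | h' <;> simp_all
    rw [show f y * infDist y {z | f z ≠ f y} ^ α = -(f x * infDist y {z | f z ≠ f y} ^ α) by
      rw [hfy, neg_mul], sub_neg_eq_add, ← mul_add, abs_mul, habs, one_mul, abs_of_nonneg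
      (add_nonneg (Real.rpow_nonneg (hξ x _).1 _) (Real.rpow_nonneg (hξ y _).1 _))]
    calc _ ≤ D ^ (α - 1) * dist x y + D ^ (α - 1) * dist x y :=
          add_le_add (Real.rpow_le_rpow_sub_one_mul hα (hξ x _) hξx)
            (Real.rpow_le_rpow_sub_one_mul hα (hξ y _) hξy)
      _ ≤ 2 * α * D ^ (α - 1) * dist x y := by nlinarith

theorem stmt_6 {X : Type*} [MetricSpace X] (D : ℝ) (hD : 0 < D)
    (hbd : ∀ x y : X, dist x y ≤ D) (f : X → ℝ)
    (hf : ∀ x, f x = -1 ∨ f x = 1)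
    (hA : ∀ x : X, {y : X | f y ≠ f x}.Nonempty)
    (α : ℝ) (hα : 1 ≤ α) (x y : X) :
    |f x * Metric.infDist x {z : X | f z ≠ f x} ^ α -
      f y * Metric.infDist y {z : X | f z ≠ f y} ^ α| ≤ 2 * α * D ^ (α - 1) * dist x y :=
  stmt_6_general D hbd f hf α hα x y
end

section
/- Let X be a metric space, f : X → {-1,1} with A_x = {y : f(y) ≠ f(x)} nonempty for all x, ξ(x) = d(x, A_x), and ℓ_α(x) = f(x)·ξ(x)^α for α > 0. If f(x) ≠ f(y) and α ≥ 1 with d bounded by D > 0, then |ℓ_α(x) − ℓ_α(y)| ≤ 2α·D^{α−1}·d(x,y). -/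
/-!
Opposite labels force `f y = -f x`, so the difference is `ξ(x)^α + ξ(y)^α`. Each of `x`, `y` lies
in the other's opposite level set, so `ξ(x), ξ(y) ≤ d(x, y)`, and `t^α ≤ D^(α-1) t` for `0 ≤ t ≤ D`.
-/

open Metric

lemma Real.rpow_le_rpow_sub_one_mul_s8 {t D α : ℝ} (ht : 0 ≤ t) (htD : t ≤ D) (hα : 1 ≤ α) :
    t ^ α ≤ D ^ (α - 1) * t := by
  rcases ht.eq_or_lt with rfl | ht
  · rw [Real.zero_rpow (by linarith), mul_zero]
  calc t ^ α = t ^ (α - 1) * t := by rw [← Real.rpow_add_one ht.ne', sub_add_cancel]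
    _ ≤ D ^ (α - 1) * t := by gcongr

lemma abs_mul_sub_mul_of_ne_of_mem_neg_one_one {u v : ℝ} (hu : u = -1 ∨ u = 1)
    (hv : v = -1 ∨ v = 1) (h : u ≠ v) (a b : ℝ) : |u * a - v * b| = |a + b| := by
  have hvu : v = -u := by rcases hu with rfl | rfl <;> rcases hv with rfl | rfl <;> grind
  have hu1 : |u| = 1 := by rcases hu with rfl | rfl <;> simp
  rw [hvu, neg_mul, sub_neg_eq_add, ← mul_add, abs_mul, hu1, one_mul]

lemma infDist_levelSet_compl_le_dist {X β : Type*} [PseudoMetricSpace X] {f : X → β} {x y : X}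
    (h : f x ≠ f y) : infDist x {z | f z ≠ f x} ≤ dist x y :=
  infDist_le_dist_of_mem (Ne.symm h)

lemma infDist_levelSet_compl_rpow_le {X β : Type*} [PseudoMetricSpace X] {D α : ℝ}
    (hbd : ∀ x y : X, dist x y ≤ D) (hα : 1 ≤ α) {f : X → β} {x y : X} (h : f x ≠ f y) :
    infDist x {z | f z ≠ f x} ^ α ≤ D ^ (α - 1) * dist x y :=
  calc infDist x {z | f z ≠ f x} ^ α ≤ dist x y ^ α := by
        gcongr
        · exact infDist_nonneg
        · exact infDist_levelSet_compl_le_dist h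
    _ ≤ D ^ (α - 1) * dist x y := Real.rpow_le_rpow_sub_one_mul_s8 dist_nonneg (hbd x y) hα

theorem stmt_8_general {X : Type*} [MetricSpace X] (D : ℝ)
    (hbd : ∀ x y : X, dist x y ≤ D) (f : X → ℝ)
    (hf : ∀ x, f x = -1 ∨ f x = 1)
    (α : ℝ) (hα : 1 ≤ α) (x y : X) (hxy : f x ≠ f y) :
    |f x * Metric.infDist x {z : X | f z ≠ f x} ^ α -
      f y * Metric.infDist y {z : X | f z ≠ f y} ^ α| ≤ 2 * α * D ^ (α - 1) * dist x y := by
  have hx := infDist_levelSet_compl_rpow_le hbd hα hxy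
  have hy := infDist_levelSet_compl_rpow_le hbd hα hxy.symm
  rw [dist_comm] at hy
  have hx0 := Real.rpow_nonneg (infDist_nonneg (x := x) (s := {z | f z ≠ f x})) α
  have hy0 := Real.rpow_nonneg (infDist_nonneg (x := y) (s := {z | f z ≠ f y})) α
  have hK : 0 ≤ D ^ (α - 1) * dist x y := hx0.trans hx
  rw [abs_mul_sub_mul_of_ne_of_mem_neg_one_one (hf x) (hf y) hxy,
    abs_of_nonneg (add_nonneg hx0 hy0)]
  calc _ ≤ 2 * (D ^ (α - 1) * dist x y) := by linarith
    _ ≤ 2 * α * D ^ (α - 1) * dist x y := by nlinarith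

theorem stmt_8 {X : Type*} [MetricSpace X] (D : ℝ) (hD : 0 < D)
    (hbd : ∀ x y : X, dist x y ≤ D) (f : X → ℝ)
    (hf : ∀ x, f x = -1 ∨ f x = 1)
    (hA : ∀ x : X, {y : X | f y ≠ f x}.Nonempty)
    (α : ℝ) (hα : 1 ≤ α) (x y : X) (hxy : f x ≠ f y) :
    |f x * Metric.infDist x {z : X | f z ≠ f x} ^ α -
      f y * Metric.infDist y {z : X | f z ≠ f y} ^ α| ≤ 2 * α * D ^ (α - 1) * dist x y :=
  stmt_8_general D hbd f hf α hα x y hxy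
end

section
/- Let X be a metric space bounded by D, f : X → {-1,1} with A_x nonempty for all x, ξ(x) = d(x,A_x), and ℓ_α(x) = f(x)·ξ(x)^α. Then for all α ≥ 1, ℓ_α is uniformly continuous on X; and for 0 < α ≤ 1, ℓ_α is uniformly continuous on X. -/
/-!
The signed distance `g x = f x * ξ x` is `2`-Lipschitz: if `f x = f y` the two distances are to
the same set, and otherwise `y ∈ A_x` and `x ∈ A_y`, so `|g x|, |g y| ≤ d(x, y)`. Since `|g| ≤ D`,
`ℓ_α = φ_α ∘ g` with `φ_α(t) = sign t · |t|^α`, which is uniformly continuous on `[-D, D]`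
by Heine–Cantor.
-/

open Metric Set

theorem UniformContinuous.comp_continuousOn_of_isCompact {α β γ : Type*} [UniformSpace α]
    [UniformSpace β] [UniformSpace γ] {g : α → β} {φ : β → γ} {K : Set β} (hK : IsCompact K)
    (hφ : ContinuousOn φ K) (hg : UniformContinuous g) (hgK : ∀ x, g x ∈ K) :
    UniformContinuous (φ ∘ g) :=
  uniformContinuousOn_univ.mp <|
    (hK.uniformContinuousOn_of_continuous hφ).comp hg.uniformContinuousOn fun x _ => hgK x

theorem Metric.infDist_le_of_forall_dist_le {X : Type*} [PseudoMetricSpace X] {x : X}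
    {s : Set X} {D : ℝ} (h : ∀ y, dist x y ≤ D) : infDist x s ≤ D := by
  rcases s.eq_empty_or_nonempty with rfl | ⟨y, hy⟩
  · simpa using h x
  · exact (infDist_le_dist_of_mem hy).trans (h y)

theorem lipschitzWith_two_mul_infDist_ne {X : Type*} [PseudoMetricSpace X] {f : X → ℝ}
    (hf : ∀ x, |f x| ≤ 1) :
    LipschitzWith 2 fun x => f x * infDist x {z | f z ≠ f x} := by
  refine LipschitzWith.of_dist_le_mul fun x y => ?_
  rw [Real.dist_eq, NNReal.coe_ofNat]
  by_cases hxy : f x = f y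
  · have hξ : |infDist x {z | f z ≠ f y} - infDist y {z | f z ≠ f y}| ≤ dist x y := by
      simpa [Real.dist_eq] using (lipschitz_infDist_pt {z | f z ≠ f y}).dist_le_mul x y
    calc |f x * infDist x {z | f z ≠ f x} - f y * infDist y {z | f z ≠ f y}|
        = |f y| * |infDist x {z | f z ≠ f y} - infDist y {z | f z ≠ f y}| := by
          rw [hxy, ← abs_mul, mul_sub]
      _ ≤ 1 * dist x y := mul_le_mul (hf y) hξ (abs_nonneg _) zero_le_one
      _ ≤ 2 * dist x y := by linarith [dist_nonneg (x := x) (y := y)]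
  · have hx : infDist x {z | f z ≠ f x} ≤ dist x y := infDist_le_dist_of_mem (Ne.symm hxy)
    have hy : infDist y {z | f z ≠ f y} ≤ dist x y :=
      dist_comm x y ▸ infDist_le_dist_of_mem hxy
    have habs : ∀ w, |f w * infDist w {z | f z ≠ f w}| ≤ infDist w {z | f z ≠ f w} := fun w => by
      rw [abs_mul, abs_of_nonneg infDist_nonneg]
      exact mul_le_of_le_one_left infDist_nonneg (hf w)
    calc _ ≤ |f x * infDist x {z | f z ≠ f x}| + |f y * infDist y {z | f z ≠ f y}| := abs_sub _ _
      _ ≤ 2 * dist x y := by linarith [habs x, habs y]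

namespace Real

/-- The odd extension `sign t * |t| ^ α` of `t ↦ t ^ α`, written so that continuity is evident. -/
noncomputable def signedRpow (α t : ℝ) : ℝ := max t 0 ^ α - max (-t) 0 ^ α

theorem continuous_signedRpow {α : ℝ} (hα : 0 < α) : Continuous (signedRpow α) :=
  ((continuous_id.max continuous_const).rpow_const fun _ => Or.inr hα.le).sub
    ((continuous_neg.max continuous_const).rpow_const fun _ => Or.inr hα.le)

theorem signedRpow_mul_of_nonneg {α s r : ℝ} (hα : 0 < α) (hs : s = -1 ∨ s = 1) (hr : 0 ≤ r) :
    signedRpow α (s * r) = s * r ^ α := by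
  have hr' : -r ≤ 0 := neg_nonpos.mpr hr
  rcases hs with rfl | rfl <;>
    simp [signedRpow, max_eq_left hr, max_eq_right hr', zero_rpow hα.ne']

end Real

theorem stmt_17_general {X : Type*} [MetricSpace X] (D : ℝ)
    (hbd : ∀ x y : X, dist x y ≤ D) (f : X → ℝ)
    (hf : ∀ x, f x = -1 ∨ f x = 1) (α : ℝ) :
    (1 ≤ α → UniformContinuous fun x : X => f x * Metric.infDist x {z : X | f z ≠ f x} ^ α) ∧
    (0 < α → α ≤ 1 →
      UniformContinuous fun x : X => f x * Metric.infDist x {z : X | f z ≠ f x} ^ α) := by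
  suffices h : 0 < α →
      UniformContinuous fun x : X => f x * Metric.infDist x {z : X | f z ≠ f x} ^ α from
    ⟨fun h1 => h (one_pos.trans_le h1), fun h0 _ => h h0⟩
  intro hα
  have hf_abs : ∀ x, |f x| = 1 := fun x => by rcases hf x with h | h <;> simp [h]
  have hg_mem : ∀ x, f x * infDist x {z | f z ≠ f x} ∈ Icc (-D) D := fun x => by
    rw [mem_Icc, ← abs_le, abs_mul, hf_abs, one_mul, abs_of_nonneg infDist_nonneg]
    exact infDist_le_of_forall_dist_le (hbd x)
  have hℓ : (fun x => f x * infDist x {z | f z ≠ f x} ^ α) =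
      Real.signedRpow α ∘ fun x => f x * infDist x {z | f z ≠ f x} :=
    funext fun x => (Real.signedRpow_mul_of_nonneg hα (hf x) infDist_nonneg).symm
  rw [hℓ]
  exact (lipschitzWith_two_mul_infDist_ne fun x => (hf_abs x).le).uniformContinuous
    |>.comp_continuousOn_of_isCompact isCompact_Icc
      (Real.continuous_signedRpow hα).continuousOn hg_mem

theorem stmt_17 {X : Type*} [MetricSpace X] (D : ℝ) (hD : 0 < D)
    (hbd : ∀ x y : X, dist x y ≤ D) (f : X → ℝ)
    (hf : ∀ x, f x = -1 ∨ f x = 1)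
    (hA : ∀ x : X, {y : X | f y ≠ f x}.Nonempty) (α : ℝ) :
    (1 ≤ α → UniformContinuous fun x : X => f x * Metric.infDist x {z : X | f z ≠ f x} ^ α) ∧
    (0 < α → α ≤ 1 →
      UniformContinuous fun x : X => f x * Metric.infDist x {z : X | f z ≠ f x} ^ α) :=
  stmt_17_general D hbd f hf α
end
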